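/- Let n ≥ 1, let 1 ≤ i < j ≤ n be top positions and 1 ≤ k < l ≤ n be bottom positions. Suppose μ and μ' are Brauer diagrams of size n that agree on every edge not incident to any of T_i, T_j, B_k, B_l, and that μ contains the two (crossing) arcs {T_i,B_l} and {T_j,B_k}, while μ' contains the arcs {T_i,B_k} and {T_j,B_l}. Then χ(μ) ≡ χ(μ') + 1 (mod 2), i.e. (−1)^{χ(μ)} = −(−1)^{χ(μ')}. -/

import Mathlib

open Finset

/-- Vertices of a Brauer diagram of size `n`: `Sum.inl i` is the top point `T i`
and `Sum.inr m` is the bottom point `B m` (positions indexed left to right by `Fin n`). -/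
abbrev BVertex (n : ℕ) := Fin n ⊕ Fin n

/-- A Brauer diagram of size `n` is a perfect matching of the `2n` vertices,
encoded as a fixed-point-free involution. -/
def BrauerDiagram (n : ℕ) :=
  {f : Equiv.Perm (BVertex n) // (∀ x, f (f x) = x) ∧ (∀ x, f x ≠ x)}

instance (n : ℕ) : Fintype (BrauerDiagram n) := Subtype.fintype _

/-- An edge of a Brauer diagram: a cup joins two top points, a cap joins two bottom
points, and an arc joins a top point and a bottom point. In `cup i j` and `cap i j`
we maintain `i < j`, and in `arc i m`, `i` is the top position and `m` the bottom one. -/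
inductive BEdge (n : ℕ)
  | cup : Fin n → Fin n → BEdge n
  | cap : Fin n → Fin n → BEdge n
  | arc : Fin n → Fin n → BEdge n
deriving DecidableEq

/-- The canonical edge with endpoints `x` and `y`. -/
def edgeOf {n : ℕ} : BVertex n → BVertex n → BEdge n
  | .inl i, .inl j => .cup (min i j) (max i j)
  | .inr i, .inr j => .cap (min i j) (max i j)
  | .inl i, .inr m => .arc i m
  | .inr m, .inl i => .arc i m

/-- Whether two edges of a Brauer diagram cross. -/
def crosses {n : ℕ} : BEdge n → BEdge n → Bool
  | .cup i j, .cup k l => decide ((i < k ∧ k < j ∧ j < l) ∨ (k < i ∧ i < l ∧ l < j))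
  | .cap i j, .cap k l => decide ((i < k ∧ k < j ∧ j < l) ∨ (k < i ∧ i < l ∧ l < j))
  | .cup _ _, .cap _ _ => false
  | .cap _ _, .cup _ _ => false
  | .cup i j, .arc k _ => decide (i < k ∧ k < j)
  | .arc k _, .cup i j => decide (i < k ∧ k < j)
  | .cap i j, .arc _ m => decide (i < m ∧ m < j)
  | .arc _ m, .cap i j => decide (i < m ∧ m < j)
  | .arc i m, .arc j m' => decide ((i < j ∧ m' < m) ∨ (j < i ∧ m < m'))

/-- The set of edges of a Brauer diagram. -/
def edges {n : ℕ} (μ : BrauerDiagram n) : Finset (BEdge n) :=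
  Finset.univ.image fun x => edgeOf x (μ.1 x)

/-- The crossing number of a Brauer diagram: the number of unordered pairs of
its edges that cross. -/
def crossingNumber {n : ℕ} (μ : BrauerDiagram n) : ℕ :=
  ((edges μ).offDiag.filter fun p => crosses p.1 p.2 = true).card / 2

/-!
Removing the two arcs leaves an edge set `E` common to `μ` and `μ'`, so each crossing number is
the number of crossings inside `E`, plus the crossings of the two arcs with `E`, plus one for the
crossing of `{T_i,B_l}` with `{T_j,B_k}`; the arcs `{T_i,B_k}` and `{T_j,B_l}` do not cross.
An edge of `E` meets both pairs of arcs equally often mod 2: a cup (cap) crosses an arc according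
to its top (bottom) endpoint alone, and an arc `{T_a,B_m}` of `E` crosses `{T_p,B_q}` iff exactly
one of `p < a`, `q < m` holds, so both counts are `[i < a] + [j < a] + [k < m] + [l < m]` mod 2.
-/

variable {n : ℕ}

lemma crosses_comm (a b : BEdge n) : crosses a b = crosses b a := by
  cases a <;> cases b <;> simp only [crosses, decide_eq_decide] <;> tauto

lemma crosses_self (a : BEdge n) : crosses a a = false := by
  cases a <;> simp [crosses]

def crossingsWith (a : BEdge n) (s : Finset (BEdge n)) : ℕ :=
  #(s.filter fun b => crosses a b)

def crossingCount (s : Finset (BEdge n)) : ℕ :=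
  #(s.offDiag.filter fun p => crosses p.1 p.2) / 2

lemma crossingNumber_eq_crossingCount (μ : BrauerDiagram n) :
    crossingNumber μ = crossingCount (edges μ) := rfl

lemma crossingsWith_insert {a b : BEdge n} {s : Finset (BEdge n)} (hb : b ∉ s) :
    crossingsWith a (insert b s) = crossingsWith a s + if crosses a b then 1 else 0 := by
  unfold crossingsWith
  split_ifs with h
  · rw [filter_insert, if_pos h, card_insert_of_notMem (fun h' => hb (mem_filter.mp h').1)]
  · rw [filter_insert, if_neg h, add_zero]

lemma card_filter_crosses_offDiag (s : Finset (BEdge n)) :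
    #(s.offDiag.filter fun p => crosses p.1 p.2) = ∑ a ∈ s, crossingsWith a s := by
  have hdiag : (s.offDiag.filter fun p => crosses p.1 p.2)
      = (s ×ˢ s).filter fun p => crosses p.1 p.2 := by
    ext ⟨a, b⟩
    simp only [mem_filter, mem_offDiag, mem_product]
    constructor
    · exact fun ⟨⟨ha, hb, _⟩, h⟩ => ⟨⟨ha, hb⟩, h⟩
    · rintro ⟨⟨ha, hb⟩, h⟩
      exact ⟨⟨ha, hb, by rintro rfl; simp [crosses_self] at h⟩, h⟩
  rw [hdiag, card_filter, sum_product]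
  simp only [crossingsWith, card_filter]

lemma crossingCount_insert {a : BEdge n} {s : Finset (BEdge n)} (ha : a ∉ s) :
    crossingCount (insert a s) = crossingCount s + crossingsWith a s := by
  have hsum : ∑ b ∈ s, (if crosses b a then 1 else 0) = crossingsWith a s := by
    simp only [crossingsWith, card_filter, crosses_comm a]
  have hcount : #((insert a s).offDiag.filter fun p => crosses p.1 p.2)
      = #(s.offDiag.filter fun p => crosses p.1 p.2) + 2 * crossingsWith a s := by
    rw [card_filter_crosses_offDiag, card_filter_crosses_offDiag, sum_insert ha,
      crossingsWith_insert ha, crosses_self, sum_congr rfl fun b _ => crossingsWith_insert ha,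
      sum_add_distrib, hsum]
    simp only [Bool.false_eq_true, if_false]
    ring
  unfold crossingCount
  -- `(c + 2 * w) / 2 = c / 2 + w` whether or not `c` is even
  omega

lemma crosses_arc_swap_modEq {i j k l : Fin n} {e : BEdge n}
    (he : ∀ a m, e = .arc a m → a ≠ i ∧ a ≠ j ∧ m ≠ k ∧ m ≠ l) :
    (if crosses (.arc i l) e then 1 else 0) + (if crosses (.arc j k) e then 1 else 0)
      ≡ (if crosses (.arc i k) e then 1 else 0) + (if crosses (.arc j l) e then 1 else 0)
        [MOD 2] := by
  cases e with
  | cup a b => simp only [crosses]; rfl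
  | cap a b => simp only [crosses]; rw [add_comm]; rfl
  | arc a m =>
    obtain ⟨hai, haj, hmk, hml⟩ := he a m rfl
    simp only [crosses, decide_eq_true_eq, Fin.lt_def, Nat.ModEq] at *
    rw [Ne, Fin.ext_iff] at hai haj hmk hml
    split_ifs <;> omega

lemma crossingsWith_arc_swap_modEq {i j k l : Fin n} {s : Finset (BEdge n)}
    (hs : ∀ a m, .arc a m ∈ s → a ≠ i ∧ a ≠ j ∧ m ≠ k ∧ m ≠ l) :
    crossingsWith (.arc i l) s + crossingsWith (.arc j k) s
      ≡ crossingsWith (.arc i k) s + crossingsWith (.arc j l) s [MOD 2] := by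
  simp only [crossingsWith, card_filter, ← sum_add_distrib]
  exact Nat.ModEq.sum fun e he => crosses_arc_swap_modEq fun a m h => hs a m (h ▸ he)

lemma crossingCount_arc_swap_modEq {i j k l : Fin n} (hij : i < j) (hkl : k < l)
    {s : Finset (BEdge n)} (hs : ∀ a m, .arc a m ∈ s → a ≠ i ∧ a ≠ j ∧ m ≠ k ∧ m ≠ l) :
    crossingCount (insert (.arc i l) (insert (.arc j k) s))
      ≡ crossingCount (insert (.arc i k) (insert (.arc j l) s)) + 1 [MOD 2] := by
  have hjk : .arc j k ∉ s := fun h => (hs j k h).2.1 rfl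
  have hjl : .arc j l ∉ s := fun h => (hs j l h).2.1 rfl
  have hil : .arc i l ∉ insert (.arc j k) s := by
    rw [mem_insert, not_or, BEdge.arc.injEq, not_and]
    exact ⟨fun h => absurd h hij.ne, fun h => (hs i l h).1 rfl⟩
  have hik : .arc i k ∉ insert (.arc j l) s := by
    rw [mem_insert, not_or, BEdge.arc.injEq, not_and]
    exact ⟨fun h => absurd h hij.ne, fun h => (hs i k h).1 rfl⟩
  have hcross : crosses (.arc i l) (.arc j k) := by simp [crosses, hij, hkl]
  have hcross' : ¬ crosses (.arc i k) (.arc j l) := by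
    simp only [crosses, decide_eq_true_eq, not_or, not_and, not_lt]
    exact ⟨fun _ => hkl.le, fun h => absurd h (not_lt.mpr hij.le)⟩
  have hswap := crossingsWith_arc_swap_modEq hs
  rw [crossingCount_insert hil, crossingCount_insert hjk, crossingCount_insert hik,
    crossingCount_insert hjl, crossingsWith_insert hjk, crossingsWith_insert hjl,
    if_pos hcross, if_neg hcross']
  unfold Nat.ModEq at *
  omega

lemma BrauerDiagram.apply_eq_of_apply_eq {μ : BrauerDiagram n} {x y : BVertex n}
    (h : μ.1 x = y) : μ.1 y = x :=
  h ▸ μ.2.1 x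

def edgesOn (μ : BrauerDiagram n) (S : Finset (BVertex n)) : Finset (BEdge n) :=
  S.image fun x => edgeOf x (μ.1 x)

lemma edges_eq_edgesOn_union_edgesOn_compl (μ : BrauerDiagram n) (S : Finset (BVertex n)) :
    edges μ = edgesOn μ S ∪ edgesOn μ Sᶜ := by
  rw [edgesOn, edgesOn, ← image_union, union_compl]
  rfl

lemma edgesOn_congr {μ μ' : BrauerDiagram n} {S : Finset (BVertex n)}
    (h : ∀ x ∈ S, μ.1 x = μ'.1 x) : edgesOn μ S = edgesOn μ' S :=
  image_congr fun x hx => by rw [h x hx]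

lemma eq_of_edgeOf_eq_arc {x y : BVertex n} {a m : Fin n} (h : edgeOf x y = .arc a m) :
    x = .inl a ∧ y = .inr m ∨ x = .inr m ∧ y = .inl a := by
  cases x <;> cases y <;> simp_all [edgeOf]

lemma arc_mem_edgesOn_compl {μ : BrauerDiagram n} {S : Finset (BVertex n)}
    (hS : ∀ x ∈ S, μ.1 x ∈ S) {a m : Fin n} (h : .arc a m ∈ edgesOn μ Sᶜ) :
    .inl a ∉ S ∧ .inr m ∉ S := by
  obtain ⟨x, hx, hxam⟩ := mem_image.mp h
  have hx : x ∉ S := mem_compl.mp hx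
  have hy : μ.1 x ∉ S := fun hy => hx (μ.2.1 x ▸ hS _ hy)
  rcases eq_of_edgeOf_eq_arc hxam with ⟨rfl, hxm⟩ | ⟨rfl, hxa⟩
  · exact ⟨hx, hxm ▸ hy⟩
  · exact ⟨hxa ▸ hy, hx⟩

lemma apply_mem_of_arcs {μ : BrauerDiagram n} {i j k l : Fin n}
    (hil : μ.1 (.inl i) = .inr l) (hjk : μ.1 (.inl j) = .inr k) :
    ∀ x ∈ ({.inl i, .inl j, .inr k, .inr l} : Finset (BVertex n)),
      μ.1 x ∈ ({.inl i, .inl j, .inr k, .inr l} : Finset (BVertex n)) := by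
  simp [hil, hjk, BrauerDiagram.apply_eq_of_apply_eq hil, BrauerDiagram.apply_eq_of_apply_eq hjk]

lemma edges_eq_insert_arc_insert_arc {μ : BrauerDiagram n} {i j k l : Fin n}
    (hil : μ.1 (.inl i) = .inr l) (hjk : μ.1 (.inl j) = .inr k) :
    edges μ = insert (.arc i l) (insert (.arc j k)
      (edgesOn μ ({.inl i, .inl j, .inr k, .inr l} : Finset (BVertex n))ᶜ)) := by
  have hpair : edgesOn μ {.inl i, .inl j, .inr k, .inr l} = {.arc i l, .arc j k} := by
    ext e
    simp only [edgesOn, image_insert, image_singleton, mem_insert, mem_singleton, hil, hjk,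
      BrauerDiagram.apply_eq_of_apply_eq hil, BrauerDiagram.apply_eq_of_apply_eq hjk, edgeOf]
    tauto
  rw [edges_eq_edgesOn_union_edgesOn_compl μ {.inl i, .inl j, .inr k, .inr l}, hpair,
    insert_union, singleton_union]

lemma neg_one_pow_eq_neg_of_modEq {R : Type*} [Monoid R] [HasDistribNeg R] {a b : ℕ}
    (h : a ≡ b + 1 [MOD 2]) : (-1 : R) ^ a = -(-1) ^ b := by
  rw [neg_one_pow_congr (n := b + 1) (by rw [Nat.even_iff, Nat.even_iff, h]), pow_succ,
    mul_neg_one]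

theorem crossing_arcs_to_arcs_parity_general (n : ℕ) (i j k l : Fin n)
    (hij : i < j) (hkl : k < l) (μ μ' : BrauerDiagram n)
    (harc1 : μ.1 (Sum.inl i) = Sum.inr l)
    (harc2 : μ.1 (Sum.inl j) = Sum.inr k)
    (harc1' : μ'.1 (Sum.inl i) = Sum.inr k)
    (harc2' : μ'.1 (Sum.inl j) = Sum.inr l)
    (hagree : ∀ x : BVertex n, x ≠ Sum.inl i → x ≠ Sum.inl j →
      x ≠ Sum.inr k → x ≠ Sum.inr l → μ.1 x = μ'.1 x) :
    (-1 : ℤ) ^ crossingNumber μ = -(-1 : ℤ) ^ crossingNumber μ' := by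
  set S : Finset (BVertex n) := {.inl i, .inl j, .inr k, .inr l}
  have hrest : edgesOn μ' Sᶜ = edgesOn μ Sᶜ := by
    refine edgesOn_congr fun x hx => (?_ : μ.1 x = μ'.1 x).symm
    simp only [S, mem_compl, mem_insert, mem_singleton, not_or] at hx
    exact hagree x hx.1 hx.2.1 hx.2.2.1 hx.2.2.2
  have hμ' : edges μ' = insert (.arc i k) (insert (.arc j l) (edgesOn μ Sᶜ)) := by
    rw [edges_eq_insert_arc_insert_arc harc1' harc2', pair_comm, hrest]
  have hcompl : ∀ a m, .arc a m ∈ edgesOn μ Sᶜ → a ≠ i ∧ a ≠ j ∧ m ≠ k ∧ m ≠ l := by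
    intro a m h
    have := arc_mem_edgesOn_compl (apply_mem_of_arcs harc1 harc2) h
    simp only [mem_insert, mem_singleton, not_or, reduceCtorEq, Sum.inl.injEq,
      Sum.inr.injEq] at this
    tauto
  rw [crossingNumber_eq_crossingCount, crossingNumber_eq_crossingCount,
    edges_eq_insert_arc_insert_arc harc1 harc2, hμ']
  exact neg_one_pow_eq_neg_of_modEq (crossingCount_arc_swap_modEq hij hkl hcompl)

/-- Lemma (b): replacing the two crossing arcs `{T_i,B_l}` and `{T_j,B_k}` by the
arcs `{T_i,B_k}` and `{T_j,B_l}`, all other edges remaining the same, changes the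
parity of the crossing number. -/
theorem crossing_arcs_to_arcs_parity (n : ℕ) (hn : 1 ≤ n) (i j k l : Fin n)
    (hij : i < j) (hkl : k < l) (μ μ' : BrauerDiagram n)
    (harc1 : μ.1 (Sum.inl i) = Sum.inr l)
    (harc2 : μ.1 (Sum.inl j) = Sum.inr k)
    (harc1' : μ'.1 (Sum.inl i) = Sum.inr k)
    (harc2' : μ'.1 (Sum.inl j) = Sum.inr l)
    (hagree : ∀ x : BVertex n, x ≠ Sum.inl i → x ≠ Sum.inl j →
      x ≠ Sum.inr k → x ≠ Sum.inr l → μ.1 x = μ'.1 x) :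
    (-1 : ℤ) ^ crossingNumber μ = -(-1 : ℤ) ^ crossingNumber μ' :=
  crossing_arcs_to_arcs_parity_general n i j k l hij hkl μ μ' harc1 harc2 harc1' harc2' hagree
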